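/- Invariant circles around periodic points. Assume λ is irrational. Let p ∈ ℍ and k ≥ 1 satisfy F^k(p) = p and F^j(p) ∉ ∂𝒫 for all 0 ≤ j ≤ k, where ∂𝒫 is the union of the topological boundaries in ℂ of the cones P_0,…,P_{d+1}. Then there exists ε > 0 such that for every 0 < δ < ε the set S_δ = ⋃_{r=0}^{k−1} {z ∈ ℂ : |z − F^r(p)| = δ} satisfies F(S_δ) = S_δ. Moreover, for every z ∈ S_δ the closure of the forward F-orbit of z equals S_δ if and only if m_1·θ_1 + … + m_d·θ_d is an irrational multiple of π, where m_j = card{0 ≤ i < k : F^i(p) ∈ P_j}. -/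

import Mathlib

open Complex Real Set
open scoped Classical

noncomputable section

/-- The reciprocal golden ratio Φ = (√5 − 1)/2. -/
def Phi : ℝ := (Real.sqrt 5 - 1) / 2

/-- β = (π − |α|)/2. -/
def beta {d : ℕ} (α : Fin d → ℝ) : ℝ := (π - ∑ k, α k) / 2

/-- σ_j = β + α_1 + … + α_j (partial sums of the angles, shifted by β). -/
def sig {d : ℕ} (α : Fin d → ℝ) (j : ℕ) : ℝ :=
  beta α + ∑ k ∈ Finset.univ.filter (fun k : Fin d => (k : ℕ) < j), α k

/-- θ_j = Σ_{τ(k)<τ(j)} α_k − Σ_{k<j} α_k. -/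
def theta {d : ℕ} (α : Fin d → ℝ) (τ : Equiv.Perm (Fin d)) (j : Fin d) : ℝ :=
  (∑ k ∈ Finset.univ.filter (fun k : Fin d => τ k < τ j), α k)
  - ∑ k ∈ Finset.univ.filter (fun k : Fin d => k < j), α k

/-- The cone P_0 = {z ∈ ℍ : arg z ∈ [0, β)}. -/
def P0 {d : ℕ} (α : Fin d → ℝ) : Set ℂ :=
  {z : ℂ | 0 ≤ z.im ∧ 0 ≤ z.arg ∧ z.arg < beta α}

/-- The middle cones P_1, …, P_d (0-indexed by `j : Fin d`):
P_1 corresponds to arg ∈ [β, β+α_1], and P_j (j ≥ 2) to arg ∈ (σ_{j−1}, σ_j]. -/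
def Pmid {d : ℕ} (α : Fin d → ℝ) (j : Fin d) : Set ℂ :=
  {z : ℂ | 0 ≤ z.im ∧
    (if (j : ℕ) = 0 then sig α 0 ≤ z.arg else sig α (j : ℕ) < z.arg) ∧
    z.arg ≤ sig α ((j : ℕ) + 1)}

/-- The cone P_{d+1} = {z ∈ ℍ : arg z ∈ (π−β, π]}. -/
def Pend {d : ℕ} (α : Fin d → ℝ) : Set ℂ :=
  {z : ℂ | 0 ≤ z.im ∧ π - beta α < z.arg ∧ z.arg ≤ π}

/-- The middle cone P_c = P_1 ∪ … ∪ P_d. -/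
def Pc {d : ℕ} (α : Fin d → ℝ) : Set ℂ := ⋃ j, Pmid α j

/-- The exchange map E. -/
def Emap {d : ℕ} (α : Fin d → ℝ) (τ : Equiv.Perm (Fin d)) (z : ℂ) : ℂ :=
  if h : ∃ j, z ∈ Pmid α j then
    z * Complex.exp ((theta α τ h.choose : ℝ) * Complex.I)
  else z

/-- The translation map G. -/
def Gmap {d : ℕ} (α : Fin d → ℝ) (lam eta : ℝ) (z : ℂ) : ℂ :=
  if z ∈ P0 α then z - 1
  else if z ∈ Pend α then z + (lam : ℂ)
  else if z ∈ Pc α then z - (eta : ℂ)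
  else z

/-- The translated cone exchange F = G ∘ E. -/
def Fmap {d : ℕ} (α : Fin d → ℝ) (τ : Equiv.Perm (Fin d)) (lam eta : ℝ) (z : ℂ) : ℂ :=
  Gmap α lam eta (Emap α τ z)

/-- The set of positive times at which the orbit of z visits P_c. -/
def hitSet {d : ℕ} (α : Fin d → ℝ) (τ : Equiv.Perm (Fin d)) (lam eta : ℝ) (z : ℂ) : Set ℕ :=
  {n : ℕ | 0 < n ∧ (Fmap α τ lam eta)^[n] z ∈ Pc α}

/-- The first hitting time k(z) of z to P_c (0 if the orbit never returns). -/
def hitTime {d : ℕ} (α : Fin d → ℝ) (τ : Equiv.Perm (Fin d)) (lam eta : ℝ) (z : ℂ) : ℕ :=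
  sInf (hitSet α τ lam eta z)

/-- The first return map R(z) = F^{k(z)}(z). -/
def Rmap {d : ℕ} (α : Fin d → ℝ) (τ : Equiv.Perm (Fin d)) (lam eta : ℝ) (z : ℂ) : ℂ :=
  (Fmap α τ lam eta)^[hitTime α τ lam eta z] z

/-- The union ∂𝒫 of the topological boundaries of the cones P_0, …, P_{d+1}. -/
def boundaryP {d : ℕ} (α : Fin d → ℝ) : Set ℂ :=
  frontier (P0 α) ∪ frontier (Pend α) ∪ ⋃ j, frontier (Pmid α j)

/-- The union of circles of radius δ centered at the k points of the orbit of p. -/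
def orbitCircles {d : ℕ} (α : Fin d → ℝ) (τ : Equiv.Perm (Fin d)) (lam eta : ℝ)
    (p : ℂ) (k : ℕ) (δ : ℝ) : Set ℂ :=
  ⋃ r ∈ Finset.range k, Metric.sphere ((Fmap α τ lam eta)^[r] p) δ

/-- The number of visits of the first k iterates of p to the cone P_j. -/
def visitCount {d : ℕ} (α : Fin d → ℝ) (τ : Equiv.Perm (Fin d)) (lam eta : ℝ)
    (p : ℂ) (k : ℕ) (j : Fin d) : ℕ :=
  ((Finset.range k).filter (fun i => (Fmap α τ lam eta)^[i] p ∈ Pmid α j)).card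

/-!
Off `∂𝒫` the cone memberships are locally constant, so near each point `q` of the orbit of `p`
the map `F` is the rotation about `q` by the angle `θ_j` of the cone `P_j` containing `q` (or by
`0`), followed by the translation `q ↦ F q`. For `δ` below all these radii, `F` maps the circle of
radius `δ` about `F^r p` isometrically onto the one about `F^(r+1) p`, and `F^k` rotates each
circle by `Θ = m_1 θ_1 + … + m_d θ_d`. If `Θ / 2π` is irrational, the multiples of `Θ` are dense
in `ℝ / 2πℤ`, so the orbit of any `z` fills every circle; if it is rational, `z` is periodic and
its orbit is finite.
-/

open Function Metric Filter Topology

lemma Function.Periodic.sum_range_add_left {M : Type*} [AddCommGroup M] {f : ℕ → M} {k : ℕ}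
    (hf : Periodic f k) (r : ℕ) : ∑ i ∈ Finset.range k, f (r + i) = ∑ i ∈ Finset.range k, f i := by
  have hshift : ∑ i ∈ Finset.range r, f (k + i) = ∑ i ∈ Finset.range r, f i :=
    Finset.sum_congr rfl fun i _ => by rw [add_comm]; exact hf i
  have h := Finset.sum_range_add f r k
  rw [add_comm r k, Finset.sum_range_add, hshift] at h
  exact (add_left_cancel ((add_comm _ _).trans h)).symm

lemma Function.Periodic.biUnion_range_eq_iUnion {α : Type*} {f : ℕ → Set α} {k : ℕ}
    (hf : Periodic f k) (hk : 0 < k) : ⋃ r ∈ Finset.range k, f r = ⋃ r, f r :=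
  (iUnion₂_subset fun r _ => subset_iUnion f r).antisymm <| iUnion_subset fun r => by
    rw [← hf.map_mod_nat r]
    exact subset_biUnion_of_mem (u := f) (Finset.mem_range.2 (Nat.mod_lt r hk))

lemma Function.Periodic.iUnion_comp_add_one {α : Type*} {f : ℕ → Set α} {k : ℕ}
    (hf : Periodic f k) (hk : 0 < k) : ⋃ r, f (r + 1) = ⋃ r, f r :=
  (iUnion_subset fun r => subset_iUnion f (r + 1)).antisymm <| iUnion_subset fun r => by
    rw [← hf r, show r + k = r + k - 1 + 1 by omega]
    exact subset_iUnion (fun r => f (r + 1)) _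

lemma Function.IsPeriodicPt.finite_range_iterate {α : Type*} {f : α → α} {n : ℕ} {x : α}
    (h : IsPeriodicPt f n x) (hn : 0 < n) : (range fun m => f^[m] x).Finite :=
  ((finite_Iio n).image fun m => f^[m] x).subset <| by
    rintro _ ⟨m, rfl⟩
    exact ⟨m % n, Nat.mod_lt m hn, h.iterate_mod_apply m⟩

lemma Function.IsPeriodicPt.sum_range_iterate_iterate {α M : Type*} [AddCommGroup M]
    {f : α → α} {g : α → M} {k : ℕ} {x : α} (hx : IsPeriodicPt f k x) (r : ℕ) :
    ∑ i ∈ Finset.range k, g (f^[i] (f^[r] x)) = ∑ i ∈ Finset.range k, g (f^[i] x) := by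
  have hper : Periodic (fun i => g (f^[i] x)) k := fun i => by
    simp only [iterate_add_apply, hx.eq]
  simp_rw [← iterate_add_apply, add_comm _ r]
  exact hper.sum_range_add_left r

lemma Complex.infinite_sphere (c : ℂ) {δ : ℝ} (hδ : 0 < δ) : (sphere c δ).Infinite := by
  refine (isConnected_sphere (by rw [rank_real_complex]; norm_num) c hδ.le).isPreconnected
    |>.infinite_of_nontrivial ⟨c + δ, ?_, c - δ, ?_, ?_⟩
  · simp [abs_of_pos hδ]
  · simp [abs_of_pos hδ]
  · intro h
    have := congrArg re h
    simp at this
    linarith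

lemma irrational_div_two_pi_iff {x : ℝ} : Irrational (x / (2 * π)) ↔ Irrational (x / π) := by
  rw [mul_comm, ← div_div, ← Nat.cast_two, irrational_div_natCast_iff]
  simp

lemma Circle.denseRange_exp_nat_mul {θ : ℝ} (h : Irrational (θ / (2 * π))) :
    DenseRange fun m : ℕ => Circle.exp (m * θ) := by
  have : Fact (0 < 2 * π) := ⟨two_pi_pos⟩
  have hd : DenseRange fun m : ℕ => m • (θ : AddCircle (2 * π)) :=
    denseRange_zsmul_iff_nsmul.1 (AddCircle.denseRange_zsmul_coe_iff.2 h)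
  convert AddCircle.homeomorphCircle'.surjective.denseRange.comp hd
    AddCircle.homeomorphCircle'.continuous using 2 with m
  rw [comp_apply, ← AddCircle.coe_nsmul, AddCircle.homeomorphCircle'_apply_mk, nsmul_eq_mul]

lemma eventually_mem_iff_of_notMem_frontier {X : Type*} [TopologicalSpace X] {s : Set X} {x : X}
    (h : x ∉ frontier s) : ∀ᶠ y in 𝓝 x, (y ∈ s ↔ x ∈ s) := by
  rw [frontier_eq_closure_inter_closure, mem_inter_iff, not_and_or, mem_closure_iff_frequently,
    mem_closure_iff_frequently, not_frequently, not_frequently] at h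
  rcases h with h | h
  · filter_upwards [h] with y hy using iff_of_false hy h.self_of_nhds
  · filter_upwards [h] with y hy using iff_of_true (not_not.1 hy) (not_not.1 h.self_of_nhds)

lemma Complex.arg_mul_exp_ofReal_mul_I {z : ℂ} (hz : z ≠ 0) {ψ : ℝ} (h : z.arg + ψ ∈ Ioc (-π) π) :
    (z * exp (ψ * I)).arg = z.arg + ψ := by
  have hpolar :
      z * exp (ψ * I) = ‖z‖ * (Complex.cos ↑(z.arg + ψ) + Complex.sin ↑(z.arg + ψ) * I) := by
    conv_lhs => rw [← norm_mul_exp_arg_mul_I z]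
    rw [mul_assoc, ← Complex.exp_add, ← add_mul, ← ofReal_add, exp_mul_I]
  rw [hpolar, arg_mul_cos_add_sin_mul_I (norm_pos_iff.2 hz) h]

lemma norm_exp_ofReal_mul_I_mul (θ : ℝ) (w : ℂ) : ‖exp (θ * I) * w‖ = ‖w‖ := by
  rw [norm_mul, norm_exp_ofReal_mul_I, one_mul]

def RotatesBall (F : ℂ → ℂ) (c : ℂ) (ε θ : ℝ) : Prop :=
  ∀ z ∈ ball c ε, F z = F c + exp (θ * I) * (z - c)

def RotatesAlongOrbit (F : ℂ → ℂ) (ρ : ℂ → ℝ) (c : ℂ) (ε : ℝ) : Prop :=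
  ∀ n, RotatesBall F (F^[n] c) ε (ρ (F^[n] c))

section RotatesAlongOrbit

variable {F : ℂ → ℂ} {ρ : ℂ → ℝ} {c z : ℂ} {ε δ θ : ℝ} {k : ℕ}

lemma RotatesBall.mono (h : RotatesBall F c ε θ) (hδ : δ ≤ ε) : RotatesBall F c δ θ :=
  fun z hz => h z (ball_subset_ball hδ hz)

lemma RotatesBall.image_sphere (h : RotatesBall F c ε θ) (hδ : δ < ε) :
    F '' sphere c δ = sphere (F c) δ := by
  ext w
  constructor
  · rintro ⟨z, hz, rfl⟩
    rw [mem_sphere_iff_norm, h z (sphere_subset_ball hδ hz), add_sub_cancel_left,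
      norm_exp_ofReal_mul_I_mul, ← mem_sphere_iff_norm]
    exact hz
  · intro hw
    have hz : c + exp ((-θ : ℝ) * I) * (w - F c) ∈ sphere c δ := by
      rw [mem_sphere_iff_norm, add_sub_cancel_left, norm_exp_ofReal_mul_I_mul]
      exact mem_sphere_iff_norm.1 hw
    refine ⟨_, hz, ?_⟩
    rw [h _ (sphere_subset_ball hδ hz), add_sub_cancel_left, ← mul_assoc, ← Complex.exp_add]
    push_cast
    simp

lemma RotatesAlongOrbit.iterate (h : RotatesAlongOrbit F ρ c ε) (r : ℕ) :
    RotatesAlongOrbit F ρ (F^[r] c) ε := fun n => by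
  rw [← iterate_add_apply]
  exact h (n + r)

lemma RotatesAlongOrbit.iterate_apply (h : RotatesAlongOrbit F ρ c ε) (hδ : δ < ε)
    (hz : z ∈ sphere c δ) (n : ℕ) :
    F^[n] z = F^[n] c + exp ((∑ i ∈ Finset.range n, ρ (F^[i] c) : ℝ) * I) * (z - c) := by
  induction n with
  | zero => simp
  | succ n ih =>
    have hball : F^[n] z ∈ ball (F^[n] c) ε := by
      rw [mem_ball_iff_norm, ih, add_sub_cancel_left, norm_exp_ofReal_mul_I_mul]
      exact (mem_sphere_iff_norm.1 hz).trans_lt hδ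
    rw [iterate_succ_apply', iterate_succ_apply', h n _ hball, ih, Finset.sum_range_succ]
    push_cast
    rw [add_mul, Complex.exp_add]
    ring

lemma RotatesAlongOrbit.iterate_mul_apply (h : RotatesAlongOrbit F ρ c ε)
    (hc : IsPeriodicPt F k c) (hδ : δ < ε) (hz : z ∈ sphere c δ) (m : ℕ) :
    F^[k * m] z = c + exp ((m * ∑ i ∈ Finset.range k, ρ (F^[i] c) : ℝ) * I) * (z - c) := by
  induction m with
  | zero => simp
  | succ m ih =>
    have hm : F^[k * m] z ∈ sphere c δ := by
      rw [mem_sphere_iff_norm, ih, add_sub_cancel_left, norm_exp_ofReal_mul_I_mul]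
      exact mem_sphere_iff_norm.1 hz
    rw [Nat.mul_succ, add_comm, iterate_add_apply, h.iterate_apply hδ hm, hc.eq, ih,
      add_sub_cancel_left, ← mul_assoc, ← Complex.exp_add]
    push_cast
    ring_nf

lemma RotatesAlongOrbit.sphere_subset_closure_orbit (h : RotatesAlongOrbit F ρ c ε)
    (hc : IsPeriodicPt F k c) (hδ0 : 0 < δ) (hδ : δ < ε) (hz : z ∈ sphere c δ)
    (hirr : Irrational ((∑ i ∈ Finset.range k, ρ (F^[i] c)) / (2 * π))) (n : ℕ) :
    sphere (F^[n] c) δ ⊆ closure (range fun m => F^[m] z) := by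
  set u := exp ((∑ i ∈ Finset.range n, ρ (F^[i] c) : ℝ) * I) * (z - c)
  have hu : ‖u‖ = δ := by rw [norm_exp_ofReal_mul_I_mul]; exact mem_sphere_iff_norm.1 hz
  let g : Circle → ℂ := fun v => F^[n] c + v * u
  have hg_orbit : range (g ∘ fun m : ℕ => Circle.exp (m * ∑ i ∈ Finset.range k, ρ (F^[i] c)))
      ⊆ range fun m => F^[m] z := by
    rintro _ ⟨m, rfl⟩
    have hm : F^[k * m] z ∈ sphere c δ := by
      rw [mem_sphere_iff_norm, h.iterate_mul_apply hc hδ hz, add_sub_cancel_left,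
        norm_exp_ofReal_mul_I_mul]
      exact mem_sphere_iff_norm.1 hz
    refine ⟨n + k * m, ?_⟩
    dsimp only
    rw [iterate_add_apply, h.iterate_apply hδ hm, h.iterate_mul_apply hc hδ hz,
      add_sub_cancel_left]
    simp only [g, u, comp_apply, Circle.coe_exp]
    ring
  intro w hw
  have hv : (w - F^[n] c) / u ∈ sphere (0 : ℂ) 1 := by
    rw [mem_sphere_zero_iff_norm, norm_div, hu, ← mem_sphere_iff_norm.1 hw,
      div_self (by rw [mem_sphere_iff_norm.1 hw]; exact hδ0.ne')]
  have hwg : w = g ⟨_, hv⟩ := by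
    simp only [g]
    rw [div_mul_cancel₀ _ (norm_pos_iff.1 (hu ▸ hδ0)), add_sub_cancel]
  rw [hwg]
  refine closure_mono hg_orbit ?_
  rw [range_comp]
  exact (by fun_prop : Continuous g).range_subset_closure_image_dense
    (Circle.denseRange_exp_nat_mul hirr) ⟨_, rfl⟩

lemma RotatesAlongOrbit.exists_isPeriodicPt (h : RotatesAlongOrbit F ρ c ε)
    (hc : IsPeriodicPt F k c) (hk : 0 < k) (hδ : δ < ε) (hz : z ∈ sphere c δ)
    (hrat : ¬Irrational ((∑ i ∈ Finset.range k, ρ (F^[i] c)) / (2 * π))) :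
    ∃ N, 0 < N ∧ IsPeriodicPt F N z := by
  obtain ⟨q, hq⟩ := not_not.1 hrat
  refine ⟨k * q.den, Nat.mul_pos hk q.den_pos, ?_⟩
  have hden : (q.den : ℝ) * ∑ i ∈ Finset.range k, ρ (F^[i] c) = q.num * (2 * π) := by
    rw [← Rat.num_div_den q, Rat.cast_div, Rat.cast_intCast, Rat.cast_natCast] at hq
    field_simp at hq
    linarith
  rw [IsPeriodicPt, IsFixedPt, h.iterate_mul_apply hc hδ hz, hden]
  push_cast
  rw [mul_assoc, exp_int_mul_two_pi_mul_I, one_mul, add_sub_cancel]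

lemma RotatesAlongOrbit.exists_of_isPeriodicPt (hc : IsPeriodicPt F k c) (hk : 0 < k)
    (h : ∀ i < k, ∃ ε > 0, RotatesBall F (F^[i] c) ε (ρ (F^[i] c))) :
    ∃ ε > 0, RotatesAlongOrbit F ρ c ε := by
  have hev : ∀ᶠ ε in 𝓝[>] (0 : ℝ),
      ∀ i ∈ Finset.range k, RotatesBall F (F^[i] c) ε (ρ (F^[i] c)) := by
    refine (Finset.range k).eventually_all.2 fun i hi => ?_
    obtain ⟨ε, hε, hrot⟩ := h i (Finset.mem_range.1 hi)
    filter_upwards [Ioo_mem_nhdsGT hε] with δ hδ using hrot.mono hδ.2.le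
  obtain ⟨ε, hrot, hε⟩ := (hev.and self_mem_nhdsWithin).exists
  refine ⟨ε, hε, fun n => ?_⟩
  rw [← hc.iterate_mod_apply]
  exact hrot _ (Finset.mem_range.2 (Nat.mod_lt n hk))

theorem RotatesAlongOrbit.image_biUnion_sphere (h : RotatesAlongOrbit F ρ c ε)
    (hc : IsPeriodicPt F k c) (hk : 0 < k) (hδ : δ < ε) :
    F '' ⋃ r ∈ Finset.range k, sphere (F^[r] c) δ = ⋃ r ∈ Finset.range k, sphere (F^[r] c) δ := by
  have hper : Periodic (fun r => sphere (F^[r] c) δ) k := fun r => by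
    simp only [iterate_add_apply, hc.eq]
  rw [hper.biUnion_range_eq_iUnion hk, image_iUnion, ← hper.iUnion_comp_add_one hk]
  refine iUnion_congr fun r => ?_
  rw [(h r).image_sphere hδ, ← iterate_succ_apply' F r c]

theorem RotatesAlongOrbit.closure_orbit_eq_iff (h : RotatesAlongOrbit F ρ c ε)
    (hc : IsPeriodicPt F k c) (hk : 0 < k) (hδ0 : 0 < δ) (hδ : δ < ε)
    (hz : z ∈ ⋃ r ∈ Finset.range k, sphere (F^[r] c) δ) :
    closure (range fun n => F^[n] z) = ⋃ r ∈ Finset.range k, sphere (F^[r] c) δ ↔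
      Irrational ((∑ i ∈ Finset.range k, ρ (F^[i] c)) / (2 * π)) := by
  obtain ⟨r, hr, hzr⟩ := mem_iUnion₂.1 hz
  have hr' := h.iterate r
  have hcr := hc.apply_iterate r
  rw [← hc.sum_range_iterate_iterate r]
  constructor
  · intro hcl
    by_contra hrat
    obtain ⟨N, hN, hzN⟩ := hr'.exists_isPeriodicPt hcr hk hδ hzr hrat
    have hfin := hzN.finite_range_iterate hN
    rw [hfin.isClosed.closure_eq] at hcl
    exact Complex.infinite_sphere _ hδ0 ((hcl ▸ hfin).subset
      (subset_iUnion₂ (s := fun r _ => sphere (F^[r] c) δ) r hr))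
  · intro hirr
    refine (closure_minimal ?_ (isClosed_biUnion_finset fun _ _ => isClosed_sphere)).antisymm
      (iUnion₂_subset fun s hs => ?_)
    · rintro _ ⟨n, rfl⟩
      exact (mapsTo_iff_image_subset.2 (h.image_biUnion_sphere hc hk hδ).subset).iterate n hz
    · have hs' : F^[s] c = F^[s + k - r] (F^[r] c) := by
        rw [← iterate_add_apply, Nat.sub_add_cancel
          (by linarith [Finset.mem_range.1 hr, Finset.mem_range.1 hs]), iterate_add_apply, hc.eq]
      rw [hs']
      exact hr'.sphere_subset_closure_orbit hcr hδ0 hδ hzr hirr _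

end RotatesAlongOrbit

def rotationAngle {d : ℕ} (α : Fin d → ℝ) (τ : Equiv.Perm (Fin d)) (z : ℂ) : ℝ :=
  ∑ j, if z ∈ Pmid α j then theta α τ j else 0

section Cones

variable {d : ℕ} {α : Fin d → ℝ} {τ : Equiv.Perm (Fin d)} {lam eta : ℝ} {z w q : ℂ}
  {j j' : Fin d}

lemma sig_mono (hpos : ∀ j, 0 < α j) : Monotone (sig α) := fun m n hmn => by
  unfold sig
  gcongr
  exact fun k _ _ => (hpos k).le

lemma sig_zero : sig α 0 = beta α := by simp [sig]

lemma sig_self : sig α d = π - beta α := by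
  rw [sig, Finset.filter_true_of_mem fun k _ => k.is_lt, beta]
  ring

lemma sig_succ (j : Fin d) : sig α (j + 1) = sig α j + α j := by
  have : Finset.univ.filter (fun k : Fin d => (k : ℕ) < j + 1)
      = insert j (Finset.univ.filter fun k : Fin d => (k : ℕ) < j) := by
    ext k
    simp [le_iff_eq_or_lt, Fin.val_eq_val]
  rw [sig, sig, this, Finset.sum_insert (by simp)]
  ring

lemma sig_le_arg_of_mem_Pmid (hz : z ∈ Pmid α j) : sig α j ≤ z.arg := by
  have h := hz.2.1
  split_ifs at h with h0
  · rwa [h0]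
  · exact h.le

lemma eq_of_mem_Pmid_of_mem_Pmid (hpos : ∀ j, 0 < α j) (hz : z ∈ Pmid α j) (hz' : z ∈ Pmid α j') :
    j = j' := by
  wlog hlt : (j : ℕ) < j' generalizing j j'
  · rcases (not_lt.1 hlt).eq_or_lt with h | h
    · exact Fin.ext h.symm
    · exact (this hz' hz h).symm
  have h := hz'.2.1
  rw [if_neg (by omega)] at h
  linarith [hz.2.2, sig_mono hpos (Nat.succ_le_of_lt hlt)]


lemma beta_pos (hsum : ∑ k, α k < π) : 0 < beta α := by
  unfold beta
  linarith

lemma sum_eq_pi_sub_two_mul_beta : ∑ k, α k = π - 2 * beta α := by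
  unfold beta
  ring

lemma beta_le_sig (hpos : ∀ j, 0 < α j) (m : ℕ) : beta α ≤ sig α m :=
  sig_zero (α := α) ▸ sig_mono hpos m.zero_le

lemma sig_le_pi_sub_beta (hpos : ∀ j, 0 < α j) {m : ℕ} (hm : m ≤ d) : sig α m ≤ π - beta α :=
  sig_self (α := α) ▸ sig_mono hpos hm

lemma beta_le_arg_of_mem_Pc (hpos : ∀ j, 0 < α j) (hz : z ∈ Pc α) : beta α ≤ z.arg := by
  obtain ⟨j, hj⟩ := mem_iUnion.1 hz
  exact (beta_le_sig hpos j).trans (sig_le_arg_of_mem_Pmid hj)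

lemma arg_le_of_mem_Pc (hpos : ∀ j, 0 < α j) (hz : z ∈ Pc α) : z.arg ≤ π - beta α := by
  obtain ⟨j, hj⟩ := mem_iUnion.1 hz
  exact hj.2.2.trans (sig_le_pi_sub_beta hpos j.is_lt)

lemma notMem_P0_of_mem_Pc (hpos : ∀ j, 0 < α j) (hz : z ∈ Pc α) : z ∉ P0 α :=
  fun h => (beta_le_arg_of_mem_Pc hpos hz).not_gt h.2.2

lemma notMem_Pend_of_mem_Pc (hpos : ∀ j, 0 < α j) (hz : z ∈ Pc α) : z ∉ Pend α :=
  fun h => (arg_le_of_mem_Pc hpos hz).not_gt h.2.1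

lemma mem_Pc_of_arg (hd : 0 < d) (him : 0 ≤ z.im)
    (h1 : beta α ≤ z.arg) (h2 : z.arg ≤ π - beta α) : z ∈ Pc α := by
  have hlast : z.arg ≤ sig α (d - 1 + 1) := by rwa [Nat.sub_add_cancel hd, sig_self]
  have hex : ∃ m, z.arg ≤ sig α (m + 1) := ⟨d - 1, hlast⟩
  have hlt : Nat.find hex < d := (Nat.find_min' hex hlast).trans_lt (by omega)
  refine mem_iUnion.2 ⟨⟨Nat.find hex, hlt⟩, him, ?_, Nat.find_spec hex⟩
  split_ifs with h0
  · rwa [sig_zero]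
  · have h0' : Nat.find hex ≠ 0 := h0
    have hmin := Nat.find_min hex (show Nat.find hex - 1 < Nat.find hex by omega)
    rwa [Nat.sub_add_cancel (by omega), not_le] at hmin

lemma sig_add_theta (j : Fin d) :
    sig α j + theta α τ j = beta α + ∑ k ∈ Finset.univ.filter (fun k => τ k < τ j), α k := by
  simp only [sig, theta, Fin.lt_def]
  ring

lemma ne_zero_of_mem_Pmid (hpos : ∀ j, 0 < α j) (hsum : ∑ k, α k < π) (hz : z ∈ Pmid α j) :
    z ≠ 0 := by
  rintro rfl
  have := (beta_le_sig hpos j).trans (sig_le_arg_of_mem_Pmid hz)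
  rw [arg_zero] at this
  exact (beta_pos hsum).not_ge this

lemma mul_exp_theta_mem_Pc (hpos : ∀ j, 0 < α j) (hsum : ∑ k, α k < π) (hz : z ∈ Pmid α j) :
    z * exp (theta α τ j * I) ∈ Pc α := by
  -- `E` turns the angles `[σ_j, σ_{j+1}]` of `P_j` into `[β + S, β + S + α_j] ⊆ [β, π - β]`.
  set S := ∑ k ∈ Finset.univ.filter (fun k => τ k < τ j), α k
  have hS0 : 0 ≤ S := Finset.sum_nonneg fun k _ => (hpos k).le
  have hS : α j + S ≤ ∑ k, α k := by
    rw [← Finset.sum_insert (by simp)]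
    exact Finset.sum_le_sum_of_subset_of_nonneg (Finset.subset_univ _) fun k _ _ => (hpos k).le
  have hlb := sig_le_arg_of_mem_Pmid hz
  have hub := hz.2.2
  rw [sig_succ] at hub
  have hθ := sig_add_theta (α := α) (τ := τ) j
  have hαβ := sum_eq_pi_sub_two_mul_beta (α := α)
  have hβ := beta_pos hsum
  have harg := arg_mul_exp_ofReal_mul_I (ne_zero_of_mem_Pmid hpos hsum hz) (ψ := theta α τ j)
    ⟨by linarith, by linarith⟩
  refine mem_Pc_of_arg j.pos (arg_nonneg_iff.1 ?_) ?_ ?_ <;> rw [harg] <;> linarith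

lemma Emap_of_mem_Pmid (hpos : ∀ j, 0 < α j) (hz : z ∈ Pmid α j) :
    Emap α τ z = z * exp (theta α τ j * I) := by
  have hex : ∃ j, z ∈ Pmid α j := ⟨j, hz⟩
  rw [Emap, dif_pos hex, eq_of_mem_Pmid_of_mem_Pmid hpos hex.choose_spec hz]

lemma Fmap_of_mem_Pmid (hpos : ∀ j, 0 < α j) (hsum : ∑ k, α k < π) (hz : z ∈ Pmid α j) :
    Fmap α τ lam eta z = z * exp (theta α τ j * I) - eta := by
  have hc := mul_exp_theta_mem_Pc (τ := τ) hpos hsum hz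
  rw [Fmap, Emap_of_mem_Pmid hpos hz, Gmap, if_neg (notMem_P0_of_mem_Pc hpos hc),
    if_neg (notMem_Pend_of_mem_Pc hpos hc), if_pos hc]

lemma Fmap_of_notMem_Pc (hz : z ∉ Pc α) : Fmap α τ lam eta z = Gmap α lam eta z := by
  rw [Fmap, Emap, dif_neg (by simpa [Pc] using hz)]

lemma Gmap_sub_eq_of_iff (h0 : z ∈ P0 α ↔ w ∈ P0 α) (he : z ∈ Pend α ↔ w ∈ Pend α)
    (hc : z ∈ Pc α ↔ w ∈ Pc α) : Gmap α lam eta z - z = Gmap α lam eta w - w := by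
  simp only [Gmap, h0, he, hc]
  split_ifs <;> ring

lemma rotationAngle_of_mem_Pmid (hpos : ∀ j, 0 < α j) (hz : z ∈ Pmid α j) :
    rotationAngle α τ z = theta α τ j := by
  rw [rotationAngle, Finset.sum_eq_single j
    (fun j' _ hj' => if_neg fun hz' => hj' (eq_of_mem_Pmid_of_mem_Pmid hpos hz' hz)) (by simp),
    if_pos hz]

lemma rotationAngle_of_notMem_Pc (hz : z ∉ Pc α) : rotationAngle α τ z = 0 :=
  Finset.sum_eq_zero fun j _ => if_neg fun h => hz (mem_iUnion.2 ⟨j, h⟩)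

lemma exists_rotatesBall_Fmap (hpos : ∀ j, 0 < α j) (hsum : ∑ k, α k < π)
    (hq : q ∉ boundaryP α) : ∃ ε > 0, RotatesBall (Fmap α τ lam eta) q ε (rotationAngle α τ q) := by
  simp only [boundaryP, mem_union, mem_iUnion, not_or, not_exists] at hq
  have hev : ∀ᶠ z in 𝓝 q, (z ∈ P0 α ↔ q ∈ P0 α) ∧ (z ∈ Pend α ↔ q ∈ Pend α) ∧
      ∀ j, (z ∈ Pmid α j ↔ q ∈ Pmid α j) :=
    (eventually_mem_iff_of_notMem_frontier hq.1.1).and <|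
      (eventually_mem_iff_of_notMem_frontier hq.1.2).and <|
      eventually_all.2 fun j => eventually_mem_iff_of_notMem_frontier (hq.2 j)
  obtain ⟨ε, hε, hball⟩ := Metric.eventually_nhds_iff_ball.1 hev
  refine ⟨ε, hε, fun z hz => ?_⟩
  obtain ⟨h0, he, hmid⟩ := hball z hz
  by_cases hqc : q ∈ Pc α
  · obtain ⟨j, hj⟩ := mem_iUnion.1 hqc
    rw [Fmap_of_mem_Pmid hpos hsum ((hmid j).2 hj), Fmap_of_mem_Pmid hpos hsum hj,
      rotationAngle_of_mem_Pmid hpos hj]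
    ring
  · have hc : z ∈ Pc α ↔ q ∈ Pc α := by simp only [Pc, mem_iUnion, hmid]
    rw [Fmap_of_notMem_Pc (hc.not.2 hqc), Fmap_of_notMem_Pc hqc, rotationAngle_of_notMem_Pc hqc,
      ofReal_zero, zero_mul, Complex.exp_zero, one_mul]
    linear_combination Gmap_sub_eq_of_iff (lam := lam) (eta := eta) h0 he hc

lemma sum_rotationAngle_eq_sum_visitCount (p : ℂ) (k : ℕ) :
    ∑ i ∈ Finset.range k, rotationAngle α τ ((Fmap α τ lam eta)^[i] p) =
      ∑ j, (visitCount α τ lam eta p k j : ℝ) * theta α τ j := by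
  simp only [rotationAngle, visitCount]
  rw [Finset.sum_comm]
  refine Finset.sum_congr rfl fun j _ => ?_
  rw [Finset.sum_ite, Finset.sum_const_zero, add_zero, Finset.sum_const, nsmul_eq_mul]

end Cones

theorem invariant_circles_around_periodic_points_general
    (d : ℕ) (α : Fin d → ℝ) (hpos : ∀ j, 0 < α j) (hsum : ∑ k, α k < π)
    (τ : Equiv.Perm (Fin d)) (lam eta : ℝ)
    (p : ℂ) (k : ℕ) (hk : 1 ≤ k)
    (hper : (Fmap α τ lam eta)^[k] p = p)
    (hbd : ∀ j ≤ k, (Fmap α τ lam eta)^[j] p ∉ boundaryP α) :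
    ∃ ε : ℝ, 0 < ε ∧ ∀ δ : ℝ, 0 < δ → δ < ε →
      (Fmap α τ lam eta '' orbitCircles α τ lam eta p k δ = orbitCircles α τ lam eta p k δ) ∧
      ∀ z ∈ orbitCircles α τ lam eta p k δ,
        (closure (Set.range fun n : ℕ => (Fmap α τ lam eta)^[n] z)
            = orbitCircles α τ lam eta p k δ
          ↔ Irrational ((∑ j, (visitCount α τ lam eta p k j : ℝ) * theta α τ j) / π)) := by
  obtain ⟨ε, hε, hrot⟩ := RotatesAlongOrbit.exists_of_isPeriodicPt (ρ := rotationAngle α τ) hper hk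
    fun i hi => exists_rotatesBall_Fmap hpos hsum (hbd i hi.le)
  refine ⟨ε, hε, fun δ hδ0 hδ => ⟨hrot.image_biUnion_sphere hper hk hδ, fun z hz => ?_⟩⟩
  rw [orbitCircles, hrot.closure_orbit_eq_iff hper hk hδ0 hδ hz, irrational_div_two_pi_iff,
    sum_rotationAngle_eq_sum_visitCount]

/-- **Invariant circles around periodic points.** If λ is irrational and p is a
k-periodic point of F whose orbit avoids ∂𝒫, then all sufficiently small unions
of circles around the orbit of p are F-invariant, and orbits on them are dense
iff m_1θ_1 + … + m_dθ_d is an irrational multiple of π. -/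
theorem invariant_circles_around_periodic_points
    (d : ℕ) (hd : 1 ≤ d) (α : Fin d → ℝ) (hpos : ∀ j, 0 < α j) (hsum : ∑ k, α k < π)
    (τ : Equiv.Perm (Fin d)) (lam eta : ℝ)
    (hlam : 0 < lam) (hirr : Irrational lam) (heta0 : 0 < eta) (hetal : eta < lam)
    (p : ℂ) (hp : 0 ≤ p.im) (k : ℕ) (hk : 1 ≤ k)
    (hper : (Fmap α τ lam eta)^[k] p = p)
    (hbd : ∀ j ≤ k, (Fmap α τ lam eta)^[j] p ∉ boundaryP α) :
    ∃ ε : ℝ, 0 < ε ∧ ∀ δ : ℝ, 0 < δ → δ < ε →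
      (Fmap α τ lam eta '' orbitCircles α τ lam eta p k δ = orbitCircles α τ lam eta p k δ) ∧
      ∀ z ∈ orbitCircles α τ lam eta p k δ,
        (closure (Set.range fun n : ℕ => (Fmap α τ lam eta)^[n] z)
            = orbitCircles α τ lam eta p k δ
          ↔ Irrational ((∑ j, (visitCount α τ lam eta p k j : ℝ) * theta α τ j) / π)) :=
  invariant_circles_around_periodic_points_general d α hpos hsum τ lam eta p k hk hper hbd
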